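/- For every natural number k, let P_0, P_1, …, P_{k+1} ∈ ℚ[X] be the polynomials satisfying P_j.eval n = ∑_{i=1}^{n} i^j for all n ∈ ℕ (so P_0 = X). Let Q = P_k.comp (X − 1) and let c_j denote the coefficient of X^j in Q. Then the polynomial identity (1 + c_{k+1}) · P_{k+1} = X · P_k − ∑_{j=0}^{k} c_j · P_j holds in ℚ[X]. -/

import Mathlib

/-! Summation by parts gives `n·S_k(n) = ∑_{i ≤ n} i^(k+1) + ∑_{i ≤ n} S_k(i-1)` for the power
sums `S_j(n) = ∑_{i ≤ n} i^j`. Since `S_k(i-1) = P_k(i-1) = ∑_j c_j i^j`, the last sum equals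
`∑_j c_j S_j(n)`, so both sides of the identity agree at every natural number and hence as
polynomials. Faulhaber's formula bounds `deg P_k ≤ k + 1`, so only `c_0, …, c_{k+1}` occur. -/

open Finset Polynomial

theorem Polynomial.eq_of_eval_natCast_eq {R : Type*} [CommRing R] [IsDomain R] [CharZero R]
    {p q : R[X]} (h : ∀ n : ℕ, p.eval (n : R) = q.eval (n : R)) : p = q :=
  eq_of_infinite_eval_eq p q <|
    (Set.infinite_range_of_injective Nat.cast_injective).mono <| by rintro _ ⟨n, rfl⟩; exact h n

theorem Polynomial.sum_eval_eq_sum_coeff_mul_sum_pow {R ι : Type*} [CommSemiring R] {p : R[X]}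
    {m : ℕ} (hp : p.natDegree < m) (s : Finset ι) (x : ι → R) :
    ∑ i ∈ s, p.eval (x i) = ∑ j ∈ range m, p.coeff j * ∑ i ∈ s, x i ^ j := by
  simp_rw [eval_eq_sum_range' hp, mul_sum]
  exact sum_comm

theorem Finset.natCast_mul_sum_Icc_one {R : Type*} [CommSemiring R] (f : ℕ → R) (n : ℕ) :
    (n : R) * ∑ i ∈ Icc 1 n, f i = ∑ i ∈ Icc 1 n, (i * f i + ∑ j ∈ Icc 1 (i - 1), f j) := by
  induction n with
  | zero => simp
  | succ n ih =>
    rw [sum_Icc_succ_top (by omega), sum_Icc_succ_top (by omega), ← ih, Nat.add_sub_cancel]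
    push_cast
    ring

noncomputable def faulhaberPoly (p : ℕ) : ℚ[X] :=
  ∑ i ∈ range (p + 1), C (bernoulli' i * (p + 1).choose i / (p + 1)) * X ^ (p + 1 - i)

theorem faulhaberPoly_eval (p n : ℕ) :
    (faulhaberPoly p).eval (n : ℚ) = ∑ i ∈ Icc 1 n, (i : ℚ) ^ p := by
  rw [← Finset.Ico_add_one_right_eq_Icc, sum_Ico_pow, faulhaberPoly, eval_finsetSum]
  refine sum_congr rfl fun i _ => ?_
  simp only [eval_mul, eval_C, eval_pow, eval_X]
  ring

theorem natDegree_faulhaberPoly_le (p : ℕ) : (faulhaberPoly p).natDegree ≤ p + 1 :=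
  natDegree_sum_le_of_forall_le _ _ fun _ _ =>
    (natDegree_C_mul_X_pow_le _ _).trans (Nat.sub_le _ _)

theorem natDegree_le_of_eval_eq_sum_Icc_pow {P : ℚ[X]} {p : ℕ}
    (hP : ∀ n : ℕ, P.eval (n : ℚ) = ∑ i ∈ Icc 1 n, (i : ℚ) ^ p) : P.natDegree ≤ p + 1 := by
  rw [eq_of_eval_natCast_eq fun n => (hP n).trans (faulhaberPoly_eval p n).symm]
  exact natDegree_faulhaberPoly_le p

theorem stmt_16 (k : ℕ) (P : ℕ → ℚ[X])
    (hP : ∀ j, j ≤ k + 1 → ∀ n : ℕ, (P j).eval (n : ℚ) = ∑ i ∈ Icc 1 n, (i : ℚ) ^ j) :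
    (C (1 + ((P k).comp (X - 1)).coeff (k + 1))) * P (k + 1) =
      X * P k - ∑ j ∈ range (k + 1), C (((P k).comp (X - 1)).coeff j) * P j := by
  set Q := (P k).comp (X - 1)
  have hQdeg : Q.natDegree < k + 2 := by
    rw [natDegree_comp, ← C_1, natDegree_X_sub_C, mul_one]
    exact Nat.lt_succ_of_le (natDegree_le_of_eval_eq_sum_Icc_pow (hP k (by omega)))
  refine eq_of_eval_natCast_eq fun n => ?_
  have hQ_sum : ∑ i ∈ Icc 1 n, Q.eval (i : ℚ) =
      ∑ j ∈ range (k + 2), Q.coeff j * (P j).eval (n : ℚ) := by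
    rw [sum_eval_eq_sum_coeff_mul_sum_pow hQdeg]
    exact sum_congr rfl fun j hj => by rw [hP j (by grind)]
  have hQ_eval : ∀ i ∈ Icc 1 n, Q.eval (i : ℚ) = ∑ j ∈ Icc 1 (i - 1), (j : ℚ) ^ k := by
    intro i hi
    rw [← hP k (by omega), eval_comp, Nat.cast_pred (mem_Icc.mp hi).1]
    simp
  have htel := natCast_mul_sum_Icc_one (fun i => (i : ℚ) ^ k) n
  simp only [← pow_succ'] at htel
  rw [sum_add_distrib, ← sum_congr rfl hQ_eval, hQ_sum, sum_range_succ, ← hP k le_self_add,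
    ← hP (k + 1) le_rfl] at htel
  simp only [eval_mul, eval_sub, eval_C, eval_X, eval_finsetSum]
  linear_combination -htel
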